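/- Let n ≥ 3 and let m, a, b, c be integers with m ≥ 0, a ≥ 1, b ≥ 1, c ≥ 1 and a + b + c = n. Starting from the simple root α_1, apply, in order, the simple reflections s_2, s_3, …, s_a, then s_{a+b+1}, s_{a+b+2}, …, s_n, then s_{n−1}, s_{n−2}, …, s_{a+b+1}; and then apply m times in succession the block consisting of, in order: s_1, s_2, …, s_{a+b}; then s_{a+b−1}, s_{a+b−2}, …, s_1; then s_{a+b+1}, s_{a+b+2}, …, s_n; then s_{n−1}, s_{n−2}, …, s_{a+b+1}. The resulting vector is ((m+1)^a, m^b, (m+1)^c). In particular, ((m+1)^a, m^b, (m+1)^c) is a positive real root. -/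

import Mathlib

/-- The component number (in `{1, …, n}`) of a cyclic index `j : ZMod n`. -/
def compNo {n : ℕ} (j : ZMod n) : ℕ := if j.val = 0 then n else j.val

/-- The `i`-th simple root (standard basis vector) of type `Ã_{n-1}`. -/
def stdRoot (n : ℕ) (i : ZMod n) : ZMod n → ℤ := fun j => if j = i then 1 else 0

/-- The `i`-th simple reflection: `(s_i v)_j = v_j` for `j ≠ i`, and
`(s_i v)_i = v_{i-1} + v_{i+1} - v_i` (indices mod `n`). -/
def simpleRefl (n : ℕ) (i : ZMod n) (v : ZMod n → ℤ) : ZMod n → ℤ :=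
  fun j => if j = i then v (i - 1) + v (i + 1) - v i else v j

/-- Apply a list of simple reflections in order (head of the list applied first). -/
def applySeq (n : ℕ) (L : List (ZMod n)) (v : ZMod n → ℤ) : ZMod n → ℤ :=
  L.foldl (fun w i => simpleRefl n i w) v

/-- Interpret a list of natural-number indices as cyclic indices mod `n`. -/
def natSeq (n : ℕ) (L : List ℕ) : List (ZMod n) := L.map (fun k => (k : ZMod n))

/-- A real root: a vector obtained from a simple root by a finite sequence of
simple reflections. -/
def IsRealRoot (n : ℕ) (v : ZMod n → ℤ) : Prop :=
  ∃ (L : List (ZMod n)) (k : ZMod n), v = applySeq n L (stdRoot n k)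

/-- The vector whose first `a` components are `x`, next `b` components are `y`,
and remaining components are `z`. -/
def blockVec (n : ℕ) (x y z : ℤ) (a b : ℕ) : ZMod n → ℤ :=
  fun j => if compNo j ≤ a then x else if compNo j ≤ a + b then y else z

/-- The all-ones vector `𝟙`. -/
def onesVec (n : ℕ) : ZMod n → ℤ := fun _ => 1

/-- The block of reflections `s_{d+1}, …, s_{n-1}; s_n, s_{n-1}, …, s_1; s_2, …, s_d`
(in order of application). -/
def blockW (n d : ℕ) : List ℕ :=
  List.range' (d+1) (n - 1 - d) ++ (List.range' 1 n).reverse ++ List.range' 2 (d - 1)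

/-- The block of reflections `s_1, …, s_{a+b}; s_{a+b-1}, …, s_1; s_{a+b+1}, …, s_n;
s_{n-1}, …, s_{a+b+1}` (in order of application), with `d = a + b`. -/
def blockW2 (n d : ℕ) : List ℕ :=
  List.range' 1 d ++ (List.range' 1 (d-1)).reverse ++ List.range' (d+1) (n - d) ++
    (List.range' (d+1) (n - 1 - d)).reverse

/-!
An ascending run `s_{k+1}, …, s_{k+l}` of simple reflections telescopes: on the window
`k+1, …, k+l` it replaces `v_{k+t}` by `v_k - v_{k+1} + v_{k+t+1}`, i.e. it shifts the window one
step to the left up to a constant, and a descending run `s_{k+l}, …, s_{k+1}` likewise shifts it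
one step to the right. On piecewise constant vectors each run of the statement therefore just
moves one block boundary by one position and raises one block by at most one: the initial word
takes `α_1` to `(1^a, 0^b, 1^c)`, and every block of the iteration adds the all-ones vector.
Positivity is then evident, and the vector is a real root because it was reached from `α_1`.
-/

open List

section

variable {n : ℕ}

theorem natCast_ne_natCast_of_lt {p q : ℕ} (hpq : p < q) (hqp : q < p + n) :
    (p : ZMod n) ≠ q := by
  rw [Ne, ZMod.natCast_eq_natCast_iff, Nat.modEq_iff_dvd' hpq.le]
  intro h
  have := Nat.le_of_dvd (by omega) h
  omega

theorem natSeq_eq_map (L : List ℕ) : natSeq n L = L.map Nat.cast := by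
  simp [natSeq, map_eq_flatMap]

theorem natCast_notMem_natSeq_range' {k l p : ℕ}
    (hp : p ≤ k ∧ k + l < p + n ∨ k + l < p ∧ p ≤ k + n) :
    (p : ZMod n) ∉ natSeq n (range' (k + 1) l) := by
  simp only [natSeq_eq_map, mem_map, mem_range'_1, not_exists, not_and]
  intro s hs heq
  rcases hp with hp | hp
  · exact natCast_ne_natCast_of_lt (by omega) (by omega) heq.symm
  · exact natCast_ne_natCast_of_lt (by omega) (by omega) heq

theorem natSeq_append (L₁ L₂ : List ℕ) : natSeq n (L₁ ++ L₂) = natSeq n L₁ ++ natSeq n L₂ := by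
  simp only [natSeq_eq_map, map_append]

theorem natSeq_reverse (L : List ℕ) : natSeq n L.reverse = (natSeq n L).reverse := by
  simp only [natSeq_eq_map, map_reverse]

theorem applySeq_append (L₁ L₂ : List (ZMod n)) (v : ZMod n → ℤ) :
    applySeq n (L₁ ++ L₂) v = applySeq n L₂ (applySeq n L₁ v) :=
  foldl_append

theorem applySeq_apply_of_notMem {L : List (ZMod n)} {j : ZMod n} (hj : j ∉ L)
    (v : ZMod n → ℤ) : applySeq n L v j = v j := by
  induction L generalizing v with
  | nil => rfl
  | cons i L ih =>
    rw [mem_cons, not_or] at hj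
    exact (ih hj.2 _).trans (if_neg hj.1)

theorem applySeq_ascending_apply (k : ℕ) {l t : ℕ} (hl : l < n) (ht : t ≤ l)
    (v : ZMod n → ℤ) :
    applySeq n (natSeq n (range' (k + 1) l)) v (k + t : ℕ)
      = v k - v (k + 1 : ℕ) + v (k + t + 1 : ℕ) := by
  induction l generalizing t with
  | zero =>
    obtain rfl : t = 0 := by omega
    simp [applySeq, natSeq_eq_map]
  | succ l ih =>
    rw [range'_1_concat, natSeq_append, applySeq_append, show k + 1 + l = k + l + 1 by omega]
    set w := applySeq n (natSeq n (range' (k + 1) l)) v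
    have hw : ∀ p, k + l < p → p ≤ k + n → w p = v p := fun p hp hpn =>
      applySeq_apply_of_notMem (natCast_notMem_natSeq_range' (.inr ⟨hp, hpn⟩)) v
    change simpleRefl n ((k + l + 1 : ℕ) : ZMod n) w _ = _
    rcases Nat.lt_or_ge t (l + 1) with htl | htl
    · rw [simpleRefl, if_neg (natCast_ne_natCast_of_lt (by omega) (by omega))]
      exact ih hl.le (by omega)
    · obtain rfl : t = l + 1 := by omega
      have hprev : ((k + l + 1 : ℕ) : ZMod n) - 1 = (k + l : ℕ) := by push_cast; ring
      have hnext : ((k + l + 1 : ℕ) : ZMod n) + 1 = (k + l + 1 + 1 : ℕ) := by push_cast; ring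
      rw [show k + (l + 1) = k + l + 1 by omega, simpleRefl, if_pos rfl, hprev, hnext,
        ih hl.le le_rfl, hw (k + l + 1) (by omega) (by omega),
        hw (k + l + 1 + 1) (by omega) (by omega)]
      ring

theorem applySeq_descending_apply (k : ℕ) {l t : ℕ} (hl : l < n) (ht : t ≤ l)
    (v : ZMod n → ℤ) :
    applySeq n (natSeq n (range' (k + 1) l).reverse) v (k + t + 1 : ℕ)
      = v (k + t : ℕ) + v (k + l + 1 : ℕ) - v (k + l : ℕ) := by
  induction l generalizing t v with
  | zero =>
    obtain rfl : t = 0 := by omega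
    simp [applySeq, natSeq_eq_map]
  | succ l ih =>
    rw [range'_1_concat, reverse_append, natSeq_append, applySeq_append,
      show k + 1 + l = k + l + 1 by omega, show k + (l + 1) = k + l + 1 by omega]
    set u := simpleRefl n ((k + l + 1 : ℕ) : ZMod n) v
    have hu : ∀ p, k ≤ p → p ≤ k + l + 2 → p ≠ k + l + 1 → u p = v p := fun p hp hp' hne => by
      refine if_neg fun h => ?_
      rcases Nat.lt_or_gt_of_ne hne with hlt | hgt
      · exact natCast_ne_natCast_of_lt hlt (by omega) h
      · exact natCast_ne_natCast_of_lt hgt (by omega) h.symm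
    have hu_at :
        u (k + l + 1 : ℕ) = v (k + l : ℕ) + v (k + l + 1 + 1 : ℕ) - v (k + l + 1 : ℕ) := by
      refine (if_pos rfl).trans ?_
      congr 3 <;> push_cast <;> ring
    change applySeq n _ u _ = _
    rcases Nat.lt_or_ge t (l + 1) with htl | htl
    · rw [ih hl.le (by omega), hu (k + t) (by omega) (by omega) (by omega),
        hu (k + l) (by omega) (by omega) (by omega), hu_at]
      ring
    · obtain rfl : t = l + 1 := by omega
      have hout : ((k + l + 1 + 1 : ℕ) : ZMod n) ∉ natSeq n (range' (k + 1) l).reverse := by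
        rw [natSeq_reverse, mem_reverse]
        exact natCast_notMem_natSeq_range' (.inr ⟨by omega, by omega⟩)
      rw [show k + (l + 1) + 1 = k + l + 1 + 1 by omega, applySeq_apply_of_notMem hout,
        hu (k + l + 1 + 1) (by omega) (by omega) (by omega), show k + (l + 1) = k + l + 1 by omega]
      ring

theorem compNo_natCast {p : ℕ} (hp1 : 1 ≤ p) (hpn : p ≤ n) : compNo (p : ZMod n) = p := by
  have : NeZero n := ⟨by omega⟩
  rcases hpn.lt_or_eq with hpn | rfl
  · rw [compNo, ZMod.val_natCast, Nat.mod_eq_of_lt hpn, if_neg (by omega)]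
  · simp [compNo]

theorem one_le_compNo [NeZero n] (j : ZMod n) : 1 ≤ compNo j := by
  unfold compNo
  split_ifs with h
  · exact NeZero.one_le
  · omega

theorem compNo_le [NeZero n] (j : ZMod n) : compNo j ≤ n := by
  unfold compNo
  split_ifs
  · exact le_rfl
  · exact (ZMod.val_lt j).le

theorem natCast_compNo [NeZero n] (j : ZMod n) : (compNo j : ZMod n) = j := by
  unfold compNo
  split_ifs with h
  · rw [ZMod.natCast_self, ← (ZMod.val_eq_zero j).mp h]
  · exact ZMod.natCast_zmod_val j

def liftVec (n : ℕ) (f : ℕ → ℤ) : ZMod n → ℤ := fun j => f (compNo j)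

-- Only meaningful for `p ≤ n + 1`.
def cyclicRep (n p : ℕ) : ℕ := if p = 0 then n else if p = n + 1 then 1 else p

theorem liftVec_natCast_of_le (f : ℕ → ℤ) {p : ℕ} (hp1 : 1 ≤ p) (hpn : p ≤ n) :
    liftVec n f p = f p :=
  congrArg f (compNo_natCast hp1 hpn)

theorem liftVec_natCast [NeZero n] (f : ℕ → ℤ) {p : ℕ} (hp : p ≤ n + 1) :
    liftVec n f p = f (cyclicRep n p) := by
  have hn : 1 ≤ n := NeZero.one_le
  unfold cyclicRep
  split_ifs with h0 h1
  · rw [h0, ← liftVec_natCast_of_le f hn le_rfl, Nat.cast_zero, ZMod.natCast_self]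
  · rw [h1, ← liftVec_natCast_of_le f le_rfl hn, Nat.cast_succ, ZMod.natCast_self, zero_add,
      Nat.cast_one]
  · exact liftVec_natCast_of_le f (by omega) (by omega)

theorem eq_liftVec_of_forall [NeZero n] {v : ZMod n → ℤ} {f : ℕ → ℤ}
    (h : ∀ p, 1 ≤ p → p ≤ n → v p = f p) : v = liftVec n f :=
  funext fun j => (congrArg v (natCast_compNo j)).symm.trans (h _ (one_le_compNo j) (compNo_le j))

theorem applySeq_ascending_liftVec [NeZero n] {k l : ℕ} (hkl : k + l ≤ n) (hl : l < n)
    {f g : ℕ → ℤ} (hg : ∀ p, 1 ≤ p → p ≤ n → g p = if k < p ∧ p ≤ k + l then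
      f (cyclicRep n k) - f (k + 1) + f (cyclicRep n (p + 1)) else f p) :
    applySeq n (natSeq n (range' (k + 1) l)) (liftVec n f) = liftVec n g := by
  refine eq_liftVec_of_forall fun p hp1 hpn => ?_
  rw [hg p hp1 hpn]
  split_ifs with hw
  · obtain ⟨t, rfl⟩ : ∃ t, p = k + t := ⟨p - k, by omega⟩
    rw [applySeq_ascending_apply k hl (by omega), liftVec_natCast f (by omega),
      liftVec_natCast_of_le f (by omega) (by omega), liftVec_natCast f (by omega)]
  · rw [applySeq_apply_of_notMem (natCast_notMem_natSeq_range' (by omega)),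
      liftVec_natCast_of_le f hp1 hpn]

theorem applySeq_descending_liftVec [NeZero n] {k l : ℕ} (hkl : k + l + 1 ≤ n)
    {f g : ℕ → ℤ} (hg : ∀ p, 1 ≤ p → p ≤ n → g p = if k < p ∧ p ≤ k + l then
      f (cyclicRep n (p - 1)) + f (k + l + 1) - f (k + l) else f p) :
    applySeq n (natSeq n (range' (k + 1) l).reverse) (liftVec n f) = liftVec n g := by
  refine eq_liftVec_of_forall fun p hp1 hpn => ?_
  rw [hg p hp1 hpn]
  split_ifs with hw
  · obtain ⟨t, rfl⟩ : ∃ t, p = k + t + 1 := ⟨p - k - 1, by omega⟩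
    rw [applySeq_descending_apply k (by omega) (by omega), Nat.add_sub_cancel,
      liftVec_natCast f (by omega), liftVec_natCast_of_le f (by omega) (by omega),
      liftVec_natCast_of_le f (by omega) (by omega)]
  · rw [applySeq_apply_of_notMem (by
      rw [natSeq_reverse, mem_reverse]; exact natCast_notMem_natSeq_range' (by omega)),
      liftVec_natCast_of_le f hp1 hpn]

theorem stdRoot_one_eq_liftVec (hn : 2 ≤ n) :
    stdRoot n 1 = liftVec n fun p => if p = 1 then 1 else 0 := by
  have : NeZero n := ⟨by omega⟩
  refine eq_liftVec_of_forall fun p hp1 hpn => ?_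
  rcases hp1.lt_or_eq with hp1 | rfl
  · rw [stdRoot, if_neg (by exact_mod_cast (natCast_ne_natCast_of_lt hp1 (by omega)).symm),
      if_neg hp1.ne']
  · simp [stdRoot]

theorem blockVec_eq_liftVec (x y z : ℤ) (a b : ℕ) :
    blockVec n x y z a b = liftVec n fun p => if p ≤ a then x else if p ≤ a + b then y else z :=
  rfl

theorem applySeq_initialWord {a b c : ℕ} (ha : 1 ≤ a) (hb : 1 ≤ b) (hc : 1 ≤ c)
    (habc : a + b + c = n) :
    applySeq n (natSeq n (range' 2 (a - 1) ++ range' (a + b + 1) c ++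
        (range' (a + b + 1) (n - 1 - (a + b))).reverse)) (stdRoot n 1)
      = blockVec n 1 0 1 a b := by
  have : NeZero n := ⟨by omega⟩
  have h₁ : applySeq n (natSeq n (range' 2 (a - 1))) (stdRoot n 1) = blockVec n 1 0 0 a 0 := by
    rw [stdRoot_one_eq_liftVec (by omega), blockVec_eq_liftVec]
    refine applySeq_ascending_liftVec (k := 1) (by omega) (by omega) fun p hp1 hpn => ?_
    grind only [cyclicRep]
  have h₂ : applySeq n (natSeq n (range' (a + b + 1) c)) (blockVec n 1 0 0 a 0)
      = blockVec n 1 0 1 a (n - 1 - a) := by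
    rw [blockVec_eq_liftVec, blockVec_eq_liftVec]
    refine applySeq_ascending_liftVec (by omega) (by omega) fun p hp1 hpn => ?_
    grind only [cyclicRep]
  have h₃ : applySeq n (natSeq n (range' (a + b + 1) (n - 1 - (a + b))).reverse)
      (blockVec n 1 0 1 a (n - 1 - a)) = blockVec n 1 0 1 a b := by
    rw [blockVec_eq_liftVec, blockVec_eq_liftVec]
    refine applySeq_descending_liftVec (by omega) fun p hp1 hpn => ?_
    grind only [cyclicRep]
  rw [natSeq_append, natSeq_append, applySeq_append, applySeq_append, h₁, h₂, h₃]

theorem applySeq_blockW2_blockVec {a b c : ℕ} (ha : 1 ≤ a) (hb : 1 ≤ b) (hc : 1 ≤ c)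
    (habc : a + b + c = n) (x : ℤ) :
    applySeq n (natSeq n (blockW2 n (a + b))) (blockVec n (x + 1) x (x + 1) a b)
      = blockVec n (x + 1 + 1) (x + 1) (x + 1 + 1) a b := by
  have : NeZero n := ⟨by omega⟩
  have h₁ : applySeq n (natSeq n (range' 1 (a + b))) (blockVec n (x + 1) x (x + 1) a b)
      = blockVec n (x + 1) x (x + 1) (a - 1) b := by
    rw [blockVec_eq_liftVec, blockVec_eq_liftVec]
    refine applySeq_ascending_liftVec (k := 0) (by omega) (by omega) fun p hp1 hpn => ?_
    grind only [cyclicRep]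
  have h₂ : applySeq n (natSeq n (range' 1 (a + b - 1)).reverse)
      (blockVec n (x + 1) x (x + 1) (a - 1) b) = blockVec n (x + 1 + 1) (x + 1) (x + 1) a 0 := by
    rw [blockVec_eq_liftVec, blockVec_eq_liftVec]
    refine applySeq_descending_liftVec (k := 0) (by omega) fun p hp1 hpn => ?_
    grind only [cyclicRep]
  have h₃ : applySeq n (natSeq n (range' (a + b + 1) (n - (a + b))))
      (blockVec n (x + 1 + 1) (x + 1) (x + 1) a 0)
      = blockVec n (x + 1 + 1) (x + 1) (x + 1 + 1) a (n - 1 - a) := by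
    rw [blockVec_eq_liftVec, blockVec_eq_liftVec]
    refine applySeq_ascending_liftVec (by omega) (by omega) fun p hp1 hpn => ?_
    grind only [cyclicRep]
  have h₄ : applySeq n (natSeq n (range' (a + b + 1) (n - 1 - (a + b))).reverse)
      (blockVec n (x + 1 + 1) (x + 1) (x + 1 + 1) a (n - 1 - a))
      = blockVec n (x + 1 + 1) (x + 1) (x + 1 + 1) a b := by
    rw [blockVec_eq_liftVec, blockVec_eq_liftVec]
    refine applySeq_descending_liftVec (by omega) fun p hp1 hpn => ?_
    grind only [cyclicRep]
  rw [blockW2, natSeq_append, natSeq_append, natSeq_append, applySeq_append, applySeq_append,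
    applySeq_append, h₁, h₂, h₃, h₄]

theorem iterate_applySeq_blockW2 {a b c : ℕ} (ha : 1 ≤ a) (hb : 1 ≤ b) (hc : 1 ≤ c)
    (habc : a + b + c = n) (m : ℕ) :
    (fun v => applySeq n (natSeq n (blockW2 n (a + b))) v)^[m] (blockVec n 1 0 1 a b)
      = blockVec n ((m : ℤ) + 1) m ((m : ℤ) + 1) a b := by
  induction m with
  | zero => simp
  | succ m ih =>
    rw [Function.iterate_succ_apply', ih, applySeq_blockW2_blockVec ha hb hc habc, Nat.cast_succ]

theorem IsRealRoot.applySeq {v : ZMod n → ℤ} (hv : IsRealRoot n v) (L : List (ZMod n)) :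
    IsRealRoot n (applySeq n L v) := by
  obtain ⟨L₀, k, rfl⟩ := hv
  exact ⟨L₀ ++ L, k, (applySeq_append L₀ L _).symm⟩

end

theorem statement12_general (n : ℕ) (m a b c : ℕ)
    (ha : 1 ≤ a) (hb : 1 ≤ b) (hc : 1 ≤ c) (habc : a + b + c = n) :
    ((fun v => applySeq n (natSeq n (blockW2 n (a + b))) v)^[m]
        (applySeq n (natSeq n (List.range' 2 (a - 1) ++ List.range' (a + b + 1) c ++
            (List.range' (a + b + 1) (n - 1 - (a + b))).reverse))
          (stdRoot n (1 : ZMod n)))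
      = blockVec n ((m : ℤ) + 1) (m : ℤ) ((m : ℤ) + 1) a b) ∧
    IsRealRoot n (blockVec n ((m : ℤ) + 1) (m : ℤ) ((m : ℤ) + 1) a b) ∧
    (∀ j, 0 ≤ blockVec n ((m : ℤ) + 1) (m : ℤ) ((m : ℤ) + 1) a b j) := by
  have hiter := iterate_applySeq_blockW2 ha hb hc habc m
  rw [← applySeq_initialWord ha hb hc habc] at hiter
  refine ⟨hiter, ?_, fun j => ?_⟩
  · rw [← hiter]
    exact Function.Iterate.rec _ ⟨_, 1, rfl⟩ (fun v hv => hv.applySeq _) m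
  · unfold blockVec
    split_ifs <;> positivity

theorem statement12 (n : ℕ) (hn : 3 ≤ n) (m a b c : ℕ)
    (ha : 1 ≤ a) (hb : 1 ≤ b) (hc : 1 ≤ c) (habc : a + b + c = n) :
    ((fun v => applySeq n (natSeq n (blockW2 n (a + b))) v)^[m]
        (applySeq n (natSeq n (List.range' 2 (a - 1) ++ List.range' (a + b + 1) c ++
            (List.range' (a + b + 1) (n - 1 - (a + b))).reverse))
          (stdRoot n (1 : ZMod n)))
      = blockVec n ((m : ℤ) + 1) (m : ℤ) ((m : ℤ) + 1) a b) ∧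
    IsRealRoot n (blockVec n ((m : ℤ) + 1) (m : ℤ) ((m : ℤ) + 1) a b) ∧
    (∀ j, 0 ≤ blockVec n ((m : ℤ) + 1) (m : ℤ) ((m : ℤ) + 1) a b j) :=
  statement12_general n m a b c ha hb hc habc
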